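/- arXiv:1104.2756 — 11 statements merged into one kernel-verified Lean document; each statement's English description precedes it below -/
import Mathlib

section
/- (Lemma 1 of the paper.) Let P ⊆ E be a finite set of data objects contained in the known region C(o,r), let q ∈ E, let cl ∈ (0,1], and let k be a positive integer. Suppose there exists S ⊆ P with |S| = k such that CL(q,p) ≥ cl for every p ∈ S. Then for every T ⊆ P with |T| = k satisfying dist(q,p) ≤ dist(q,p′) for all p ∈ T and all p′ ∈ P \ T (i.e., T is a set of k nearest data objects of P to q), one has CL(q,p) ≥ cl for every p ∈ T. -/
/-- The confidence level of a user at `q` for a data object `p`, with respect to the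
known region `C(o,r)` (the closed ball of center `o` and radius `r`). -/
noncomputable def CL {E : Type*} [NormedAddCommGroup E] [InnerProductSpace ℝ E]
    (o : E) (r : ℝ) (q p : E) : ℝ :=
  if r < dist o q then 0
  else if dist q p ≤ r - dist o q then 1
  else (r - dist o q) / dist q p

/-- Monotonicity: if `cl ≤ CL o r q s` with `cl > 0`, `cl ≤ 1`, and `dist q p ≤ dist q s`,
then `cl ≤ CL o r q p`. -/
lemma CL_mono {E : Type*} [NormedAddCommGroup E] [InnerProductSpace ℝ E]
    (o : E) (r : ℝ) (q p s : E) (cl : ℝ) (hcl0 : 0 < cl) (hcl1 : cl ≤ 1)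
    (hd : dist q p ≤ dist q s) (hs : cl ≤ CL o r q s) : cl ≤ CL o r q p := by
  unfold CL at *
  by_cases h : r < dist o q
  · simp [h] at hs; linarith
  · simp only [h, if_false] at hs ⊢
    by_cases hp : dist q p ≤ r - dist o q
    · simpa [hp]
    · simp only [hp, if_false]
      have hps : ¬ dist q s ≤ r - dist o q := fun hh => hp (hd.trans hh)
      simp only [hps, if_false] at hs
      have h0 : 0 ≤ r - dist o q := by
        by_contra hneg
        push_neg at hneg
        have : dist q s ≤ r - dist o q → False := hps
        have hds : (r - dist o q) / dist q s ≤ 0 :=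
          div_nonpos_of_nonpos_of_nonneg (le_of_lt hneg) dist_nonneg
        linarith
      have hp0 : 0 < dist q p := lt_of_le_of_lt h0 (lt_of_not_ge hp)
      calc cl ≤ (r - dist o q) / dist q s := hs
        _ ≤ (r - dist o q) / dist q p := by
            apply div_le_div_of_nonneg_left h0 hp0 hd

/-- Lemma 1 of the paper: if a user at `q` has confidence level at least `cl` for some
`k` data objects of `P`, then the user also has confidence level at least `cl` for any
set of `k` nearest data objects of `P`. -/
theorem CL_of_kNN {E : Type*} [NormedAddCommGroup E] [InnerProductSpace ℝ E]
    (o : E) (r : ℝ) (hr : 0 < r) (P : Finset E) (hP : ∀ p ∈ P, p ∈ Metric.closedBall o r)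
    (q : E) (cl : ℝ) (hcl0 : 0 < cl) (hcl1 : cl ≤ 1) (k : ℕ) (hk : 0 < k)
    (hS : ∃ S ⊆ P, S.card = k ∧ ∀ p ∈ S, cl ≤ CL o r q p) :
    ∀ T ⊆ P, T.card = k →
      (∀ p ∈ T, ∀ p' ∈ P, p' ∉ T → dist q p ≤ dist q p') →
      ∀ p ∈ T, cl ≤ CL o r q p := by
  obtain ⟨S, hSP, hScard, hScl⟩ := hS
  intro T hTP hTcard hnear p hpT
  by_cases hST : S ⊆ T
  · have : S = T := Finset.eq_of_subset_of_card_le hST (by rw [hScard, hTcard])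
    exact hScl p (this ▸ hpT)
  · obtain ⟨s, hsS, hsT⟩ := Finset.not_subset.mp hST
    exact CL_mono o r q p s cl hcl0 hcl1 (hnear p hpT s (hSP hsS) hsT) (hScl s hsS)
end

section
/- For every cl with 0 < cl ≤ 1 and all points q, p ∈ E: CL(q,p) ≥ cl if and only if dist(o,q) + cl · dist(q,p) ≤ r. Consequently, for cl ∈ (0,1] the guaranteed region satisfies GR(cl,p) = {q ∈ E : dist(o,q) + cl · dist(q,p) ≤ r}, and in particular GR(cl,p) ⊆ C(o,r). -/
/-- The guaranteed region of a data object `p` for confidence level `cl`. -/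
def GR {E : Type*} [NormedAddCommGroup E] [InnerProductSpace ℝ E]
    (o : E) (r : ℝ) (cl : ℝ) (p : E) : Set E :=
  {q : E | cl ≤ CL o r q p}

/-- Characterization of the confidence level and of the guaranteed region:
`CL(q,p) ≥ cl` iff `dist(o,q) + cl · dist(q,p) ≤ r`; consequently
`GR(cl,p) = {q | dist(o,q) + cl · dist(q,p) ≤ r}` and `GR(cl,p) ⊆ C(o,r)`. -/
theorem CL_ge_iff_and_GR_eq {E : Type*} [NormedAddCommGroup E] [InnerProductSpace ℝ E]
    (o : E) (r : ℝ) (hr : 0 < r) (cl : ℝ) (hcl0 : 0 < cl) (hcl1 : cl ≤ 1) :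
    (∀ q p : E, cl ≤ CL o r q p ↔ dist o q + cl * dist q p ≤ r) ∧
    (∀ p : E, GR o r cl p = {q : E | dist o q + cl * dist q p ≤ r}) ∧
    (∀ p : E, GR o r cl p ⊆ Metric.closedBall o r) := by
  have key : ∀ q p : E, cl ≤ CL o r q p ↔ dist o q + cl * dist q p ≤ r := by
    intro q p
    unfold CL
    split_ifs with h1 h2
    · constructor
      · intro h; linarith
      · intro h
        have := mul_nonneg hcl0.le (dist_nonneg (x := q) (y := p))
        linarith
    · push_neg at h1
      constructor
      · intro _
        have : cl * dist q p ≤ 1 * dist q p :=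
          mul_le_mul_of_nonneg_right hcl1 (dist_nonneg (x := q) (y := p))
        nlinarith
      · intro _; exact hcl1
    · push_neg at h1 h2
      have hd : 0 < dist q p := lt_of_le_of_lt (by linarith) h2
      rw [le_div_iff₀ hd]
      constructor <;> intro h <;> linarith
  refine ⟨key, fun p => Set.ext fun q => key q p, fun p q hq => ?_⟩
  have := (key q p).mp hq
  have := mul_nonneg hcl0.le (dist_nonneg (x := q) (y := p))
  simp only [Metric.mem_closedBall, dist_comm q o]
  linarith
end

section
/- For every cl ∈ (0,1] and every data object p ∈ E, the guaranteed region GR(cl,p) is a convex subset of E. (Equivalently: if CL(q₁,p) ≥ cl and CL(q₂,p) ≥ cl, then CL(x,p) ≥ cl for every point x on the segment joining q₁ and q₂.) -/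
/-- The guaranteed region `GR(cl,p)` is convex. -/
theorem GR_convex {E : Type*} [NormedAddCommGroup E] [InnerProductSpace ℝ E]
    (o : E) (r : ℝ) (hr : 0 < r) (cl : ℝ) (hcl0 : 0 < cl) (hcl1 : cl ≤ 1) (p : E) :
    Convex ℝ (GR o r cl p) := by
  have hset : GR o r cl p = {q : E | cl * dist q p + dist q o ≤ r} := by
    ext q
    simp only [GR, Set.mem_setOf_eq, CL]
    rw [dist_comm q o]
    split_ifs with h1 h2
    · constructor
      · intro h; linarith
      · intro h
        have : 0 ≤ cl * dist q p := mul_nonneg hcl0.le dist_nonneg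
        linarith
    · constructor
      · intro _
        have : cl * dist q p ≤ dist q p := mul_le_of_le_one_left dist_nonneg hcl1
        linarith
      · intro _; exact hcl1
    · push_neg at h1 h2
      have hd : 0 < dist q p := lt_of_le_of_lt (by linarith) h2
      rw [le_div_iff₀ hd]
      constructor <;> intro h <;> linarith
  rw [hset]
  have h1 : ConvexOn ℝ Set.univ fun q : E => cl * dist q p + dist q o :=
    ((convexOn_dist p convex_univ).smul hcl0.le).add (convexOn_dist o convex_univ)
  have h2 := h1.convex_le r
  convert h2 using 1
  ext q
  simp [smul_eq_mul]
end

section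
/- (Combined option of the paper.) Let P ⊆ E be a finite set contained in the known region C(o,r), let 0 < cl_r ≤ cl ≤ 1, and let k_r, k be positive integers with k_r ≤ k ≤ |P|. Then for the fixed known region C(o,r) one has GCR(cl,k) ⊆ GCR(cl_r,k_r); that is, specifying a higher confidence level and a higher number of nearest neighbors than required yields a guaranteed combined region contained in the one for the required values. -/
/-- The guaranteed combined region: the union, over all subsets `P'` of `P` of
cardinality `k`, of the intersection of the guaranteed regions of the members of `P'`. -/
def GCR {E : Type*} [NormedAddCommGroup E] [InnerProductSpace ℝ E]
    (o : E) (r : ℝ) (P : Finset E) (cl : ℝ) (k : ℕ) : Set E :=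
  ⋃ P' ∈ {P' : Finset E | P' ⊆ P ∧ P'.card = k}, ⋂ p ∈ P', GR o r cl p

/-- Combined option of the paper: for `cl_r ≤ cl` and `k_r ≤ k`, with a fixed known
region, `GCR(cl,k) ⊆ GCR(cl_r,k_r)`. -/
theorem GCR_subset_combined {E : Type*} [NormedAddCommGroup E] [InnerProductSpace ℝ E]
    (o : E) (r : ℝ) (hr : 0 < r) (P : Finset E)
    (hP : ∀ p ∈ P, p ∈ Metric.closedBall o r)
    (cl_r cl : ℝ) (h0 : 0 < cl_r) (hrc : cl_r ≤ cl) (hc1 : cl ≤ 1)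
    (k_r k : ℕ) (hkr : 0 < k_r) (hrk : k_r ≤ k) (hkP : k ≤ P.card) :
    GCR o r P cl k ⊆ GCR o r P cl_r k_r := by
  intro q hq
  simp only [GCR, Set.mem_iUnion, Set.mem_setOf_eq] at hq ⊢
  obtain ⟨P', ⟨hP'P, hP'card⟩, hqP'⟩ := hq
  obtain ⟨P'', hP''P', hP''card⟩ := Finset.exists_subset_card_eq (hP'card ▸ hrk)
  refine ⟨P'', ⟨hP''P'.trans hP'P, hP''card⟩, ?_⟩
  simp only [Set.mem_iInter] at hqP' ⊢
  intro p hp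
  exact le_trans hrc (hqP' p (hP''P' hp))
end

section
/- (Lemma 4 of the paper.) Let o, c, x, p ∈ E and cl ∈ (0,1]. Assume dist(o,x) ≤ dist(o,c) (which holds in the paper's setting where x lies on the half-side of a rectangle centered at o, between the side's midpoint and the corner c). If dist(x,p) ≤ dist(c,p) and CL(c,p) ≥ cl, then CL(x,p) ≥ cl. -/
/-- Lemma 4 of the paper: if `x` is at least as close to the center `o` as `c` is, `x`
is at least as close to the data object `p` as `c` is, and `CL(c,p) ≥ cl`, then
`CL(x,p) ≥ cl`. -/
theorem CL_of_closer {E : Type*} [NormedAddCommGroup E] [InnerProductSpace ℝ E]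
    (o : E) (r : ℝ) (hr : 0 < r) (c x p : E) (cl : ℝ) (hcl0 : 0 < cl) (hcl1 : cl ≤ 1)
    (hox : dist o x ≤ dist o c) (hxp : dist x p ≤ dist c p)
    (hc : cl ≤ CL o r c p) :
    cl ≤ CL o r x p := by
  unfold CL at hc ⊢
  by_cases h1 : r < dist o c
  · simp [h1] at hc; linarith
  push_neg at h1
  rw [if_neg (not_lt.mpr h1)] at hc
  have h1x : ¬ r < dist o x := by linarith
  rw [if_neg h1x]
  by_cases h2 : dist x p ≤ r - dist o x
  · rw [if_pos h2]; exact hcl1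
  rw [if_neg h2]
  push_neg at h2
  have hxp0 : 0 < dist x p := by
    have : 0 ≤ r - dist o c := by linarith
    linarith
  by_cases h3 : dist c p ≤ r - dist o c
  · exfalso; linarith
  rw [if_neg h3] at hc
  calc cl ≤ (r - dist o c) / dist c p := hc
    _ ≤ (r - dist o x) / dist x p :=
      div_le_div₀ (by linarith) (by linarith) hxp0 hxp
end

section
/- (Lemma 5 of the paper.) Let o, m, u, p ∈ E with ⟪m − o, u − m⟫ = 0 (the segment from m to u is perpendicular to the direction from o to m), and let cl ∈ (0,1]. Suppose that the distance to p decreases as one moves from m to u along the segment, i.e., the map t ↦ dist(m + t·(u − m), p) is antitone on [0,1]. If CL(m,p) ≥ cl and CL(u,p) ≥ cl, then CL(x,p) ≥ cl for every point x of the segment [m,u]. -/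
open RealInnerProductSpace

private lemma CL_ge_extract {E : Type*} [NormedAddCommGroup E] [InnerProductSpace ℝ E]
    (o : E) (r : ℝ) (q p : E) (cl : ℝ) (hcl0 : 0 < cl) (hcl1 : cl ≤ 1)
    (h : cl ≤ CL o r q p) : dist o q ≤ r ∧ cl * dist q p ≤ r - dist o q := by
  simp only [CL] at h
  by_cases h1 : r < dist o q
  · rw [if_pos h1] at h; linarith
  push_neg at h1
  rw [if_neg (not_lt.mpr h1)] at h
  refine ⟨h1, ?_⟩
  by_cases h2 : dist q p ≤ r - dist o q
  · rw [if_pos h2] at h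
    nlinarith [dist_nonneg (x := q) (y := p)]
  · rw [if_neg h2] at h
    push_neg at h2
    have hpos : 0 < dist q p := by
      by_contra hc
      push_neg at hc
      have : dist q p = 0 := le_antisymm hc dist_nonneg
      rw [this] at h2; linarith
    exact (le_div_iff₀ hpos).mp h

/-- Lemma 5 of the paper: let the segment `[m,u]` be perpendicular to the direction
from `o` to `m`, and suppose the distance to `p` decreases as one moves from `m` to `u`.
If both endpoints `m` and `u` have confidence level at least `cl` for `p`, then so does
every point of the segment `[m,u]`. -/
theorem CL_of_segment_perp {E : Type*} [NormedAddCommGroup E] [InnerProductSpace ℝ E]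
    (o : E) (r : ℝ) (hr : 0 < r) (m u p : E) (cl : ℝ) (hcl0 : 0 < cl) (hcl1 : cl ≤ 1)
    (hperp : ⟪m - o, u - m⟫ = 0)
    (hanti : AntitoneOn (fun t : ℝ => dist (m + t • (u - m)) p) (Set.Icc 0 1))
    (hm : cl ≤ CL o r m p) (hu : cl ≤ CL o r u p) :
    ∀ x ∈ segment ℝ m u, cl ≤ CL o r x p := by
  obtain ⟨hdm, km⟩ := CL_ge_extract o r m p cl hcl0 hcl1 hm
  obtain ⟨hdu, ku⟩ := CL_ge_extract o r u p cl hcl0 hcl1 hu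
  rintro x ⟨a, b, ha, hb, hab, rfl⟩
  have ha' : a = 1 - b := by linarith
  subst ha'
  -- Notation
  have hA : dist o m = ‖m - o‖ := by rw [dist_comm, dist_eq_norm]
  have hD : dist o u = ‖u - o‖ := by rw [dist_comm, dist_eq_norm]
  -- perpendicularity computations
  have huo : ‖u - o‖ ^ 2 = ‖m - o‖ ^ 2 + ‖u - m‖ ^ 2 := by
    have h1 : u - o = (m - o) + (u - m) := by abel
    rw [h1, @norm_add_sq_real, hperp]; ring
  have hperp2 : ⟪m - o, b • (u - m)⟫ = 0 := by
    rw [real_inner_smul_right, hperp]; ring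
  have hxo : (1 - b) • m + b • u - o = (m - o) + b • (u - m) := by module
  have hx2 : ‖(1 - b) • m + b • u - o‖ ^ 2 = ‖m - o‖ ^ 2 + b ^ 2 * ‖u - m‖ ^ 2 := by
    rw [hxo, @norm_add_sq_real, hperp2, norm_smul, Real.norm_eq_abs, abs_of_nonneg hb]
    ring
  have hAD : ‖m - o‖ ≤ ‖u - o‖ := by
    nlinarith [norm_nonneg (m - o), norm_nonneg (u - o), sq_nonneg ‖u - m‖]
  -- dist o x ≤ (1-b) * dist o m + b * dist o u
  have hox : dist o ((1 - b) • m + b • u) ≤ (1 - b) * dist o m + b * dist o u := by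
    rw [hA, hD, dist_comm, dist_eq_norm]
    have hY0 : 0 ≤ (1 - b) * ‖m - o‖ + b * ‖u - o‖ :=
      add_nonneg (mul_nonneg ha (norm_nonneg _)) (mul_nonneg hb (norm_nonneg _))
    have hsq : ‖(1 - b) • m + b • u - o‖ ^ 2 ≤ ((1 - b) * ‖m - o‖ + b * ‖u - o‖) ^ 2 := by
      nlinarith [mul_nonneg (mul_nonneg hb ha)
        (mul_nonneg (norm_nonneg (m - o)) (sub_nonneg.mpr hAD))]
    have := Real.sqrt_le_sqrt hsq
    rwa [Real.sqrt_sq (norm_nonneg _), Real.sqrt_sq hY0] at this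
  -- convexity of dist to p
  have hxp : dist ((1 - b) • m + b • u) p ≤ (1 - b) * dist m p + b * dist u p := by
    have h1 : (1 - b) • m + b • u - p = (1 - b) • (m - p) + b • (u - p) := by module
    rw [dist_eq_norm, h1, dist_eq_norm, dist_eq_norm]
    calc ‖(1 - b) • (m - p) + b • (u - p)‖
        ≤ ‖(1 - b) • (m - p)‖ + ‖b • (u - p)‖ := norm_add_le _ _
      _ = (1 - b) * ‖m - p‖ + b * ‖u - p‖ := by
          rw [norm_smul, norm_smul, Real.norm_eq_abs, Real.norm_eq_abs,
            abs_of_nonneg ha, abs_of_nonneg hb]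
  -- key inequality
  have key : cl * dist ((1 - b) • m + b • u) p ≤ r - dist o ((1 - b) • m + b • u) := by
    calc cl * dist ((1 - b) • m + b • u) p
        ≤ cl * ((1 - b) * dist m p + b * dist u p) :=
          mul_le_mul_of_nonneg_left hxp hcl0.le
      _ = (1 - b) * (cl * dist m p) + b * (cl * dist u p) := by ring
      _ ≤ (1 - b) * (r - dist o m) + b * (r - dist o u) :=
          add_le_add (mul_le_mul_of_nonneg_left km ha) (mul_le_mul_of_nonneg_left ku hb)
      _ = r - ((1 - b) * dist o m + b * dist o u) := by ring
      _ ≤ r - dist o ((1 - b) • m + b • u) := by linarith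
  have hdx : dist o ((1 - b) • m + b • u) ≤ r := by
    have h2 := add_le_add (mul_le_mul_of_nonneg_left hdm ha) (mul_le_mul_of_nonneg_left hdu hb)
    nlinarith [hox]
  simp only [CL, if_neg (not_lt.mpr hdx)]
  by_cases h2 : dist ((1 - b) • m + b • u) p ≤ r - dist o ((1 - b) • m + b • u)
  · rw [if_pos h2]; exact hcl1
  · rw [if_neg h2]
    push_neg at h2
    have hpos : 0 < dist ((1 - b) • m + b • u) p := by
      by_contra hc
      push_neg at hc
      have h0 : dist ((1 - b) • m + b • u) p = 0 := le_antisymm hc dist_nonneg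
      rw [h0] at h2 key
      linarith
    exact (le_div_iff₀ hpos).mpr key
end

section
/- (Theorem 2 of the paper.) Let c_i and c_j be two adjacent corner points of a rectangle whose center is o, and let m be the midpoint of the segment [c_i, c_j]; concretely, assume m = (c_i + c_j)/2 and ⟪m − o, c_j − m⟫ = 0. Let p ∈ E, cl ∈ (0,1], and let c denote either c_i or c_j. If CL(c,p) ≥ cl and CL(m,p) ≥ cl, then CL(x,p) ≥ cl for every point x of the segment [m, c]. -/
open RealInnerProductSpace

lemma CL_key_of_le {E : Type*} [NormedAddCommGroup E] [InnerProductSpace ℝ E]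
    (o : E) (r : ℝ) (q p : E) (cl : ℝ) (hcl0 : 0 < cl) (hcl1 : cl ≤ 1)
    (h : cl ≤ CL o r q p) : dist o q + cl * dist q p ≤ r := by
  unfold CL at h
  split_ifs at h with h1 h2
  · linarith
  · nlinarith [dist_nonneg (x := q) (y := p)]
  · push_neg at h1 h2
    have hqp : 0 < dist q p := lt_of_le_of_lt (by linarith) h2
    rw [le_div_iff₀ hqp] at h
    linarith

lemma le_CL_of_key {E : Type*} [NormedAddCommGroup E] [InnerProductSpace ℝ E]
    (o : E) (r : ℝ) (q p : E) (cl : ℝ) (hcl0 : 0 < cl) (hcl1 : cl ≤ 1)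
    (h : dist o q + cl * dist q p ≤ r) : cl ≤ CL o r q p := by
  have hd : 0 ≤ cl * dist q p := mul_nonneg hcl0.le dist_nonneg
  unfold CL
  split_ifs with h1 h2
  · linarith
  · exact hcl1
  · push_neg at h1 h2
    have hqp : 0 < dist q p := lt_of_le_of_lt (by linarith) h2
    rw [le_div_iff₀ hqp]
    linarith

/-- Theorem 2 of the paper: let `m` be the midpoint of the side `[c_i, c_j]` of a
rectangle centered at `o` (so `⟪m − o, c_j − m⟫ = 0`), and let `c` be either `c_i` or
`c_j`. If `CL(c,p) ≥ cl` and `CL(m,p) ≥ cl`, then every point of the segment `[m,c]` has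
confidence level at least `cl` for `p`. -/
theorem CL_of_halfside {E : Type*} [NormedAddCommGroup E] [InnerProductSpace ℝ E]
    (o : E) (r : ℝ) (hr : 0 < r) (ci cj m c p : E) (cl : ℝ) (hcl0 : 0 < cl)
    (hcl1 : cl ≤ 1)
    (hm : m = midpoint ℝ ci cj) (hperp : ⟪m - o, cj - m⟫ = 0)
    (hc : c = ci ∨ c = cj)
    (hCLc : cl ≤ CL o r c p) (hCLm : cl ≤ CL o r m p) :
    ∀ x ∈ segment ℝ m c, cl ≤ CL o r x p := by
  have hkm := CL_key_of_le o r m p cl hcl0 hcl1 hCLm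
  have hkc := CL_key_of_le o r c p cl hcl0 hcl1 hCLc
  rintro x ⟨u, v, hu, hv, huv, rfl⟩
  apply le_CL_of_key o r _ p cl hcl0 hcl1
  have h1 : dist o (u • m + v • c) ≤ u * dist o m + v * dist o c := by
    calc dist o (u • m + v • c) = dist (u • o + v • o) (u • m + v • c) := by
          rw [← add_smul, huv, one_smul]
      _ ≤ u * dist o m + v * dist o c := dist_add_add_le_of_le
          (by rw [dist_smul₀, Real.norm_of_nonneg hu])
          (by rw [dist_smul₀, Real.norm_of_nonneg hv])
  have h2 : dist (u • m + v • c) p ≤ u * dist m p + v * dist c p := by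
    calc dist (u • m + v • c) p = dist (u • m + v • c) (u • p + v • p) := by
          rw [← add_smul, huv, one_smul]
      _ ≤ u * dist m p + v * dist c p := dist_add_add_le_of_le
          (by rw [dist_smul₀, Real.norm_of_nonneg hu])
          (by rw [dist_smul₀, Real.norm_of_nonneg hv])
  nlinarith [mul_nonneg hcl0.le dist_nonneg (a := cl) (b := dist (u • m + v • c) p)]
end

section
/- (Theorem 3 of the paper.) Let o be the center of the known region C(o,r), let c ∈ E be any point (in the paper, a point on the border of a rectangle centered at o), let p ∈ E and cl ∈ (0,1]. If CL(o,p) ≥ cl and CL(c,p) ≥ cl, then CL(x,p) ≥ cl for every point x of the segment [o, c]. -/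
lemma CL_ge_iff {E : Type*} [NormedAddCommGroup E] [InnerProductSpace ℝ E]
    (o : E) (r : ℝ) (q p : E) (cl : ℝ) (hcl0 : 0 < cl) (hcl1 : cl ≤ 1) :
    cl ≤ CL o r q p ↔ dist o q + cl * dist q p ≤ r := by
  unfold CL
  constructor
  · intro h
    by_cases h1 : r < dist o q
    · simp [h1] at h; linarith
    · push_neg at h1
      by_cases h2 : dist q p ≤ r - dist o q
      · nlinarith [dist_nonneg (x := q) (y := p)]
      · simp [h1.not_gt, h2] at h
        push_neg at h2
        have hD : 0 < dist q p := lt_of_le_of_lt (by linarith) h2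
        rw [le_div_iff₀ hD] at h
        linarith
  · intro h
    have hD : 0 ≤ dist q p := dist_nonneg
    have h1 : ¬ r < dist o q := by nlinarith
    simp only [h1, if_false]
    by_cases h2 : dist q p ≤ r - dist o q
    · simp [h2, hcl1]
    · simp only [h2, if_false]
      push_neg at h2
      have hDpos : 0 < dist q p := lt_of_le_of_lt (by push_neg at h1; linarith) h2
      rw [le_div_iff₀ hDpos]
      linarith

/-- Theorem 3 of the paper: if both the center `o` of the known region and a point `c`
have confidence level at least `cl` for a data object `p`, then so does every point of
the segment `[o,c]`. -/
theorem CL_of_segment_from_center {E : Type*} [NormedAddCommGroup E]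
    [InnerProductSpace ℝ E] (o : E) (r : ℝ) (hr : 0 < r) (c p : E) (cl : ℝ)
    (hcl0 : 0 < cl) (hcl1 : cl ≤ 1)
    (ho : cl ≤ CL o r o p) (hc : cl ≤ CL o r c p) :
    ∀ x ∈ segment ℝ o c, cl ≤ CL o r x p := by
  rw [CL_ge_iff o r o p cl hcl0 hcl1] at ho
  rw [CL_ge_iff o r c p cl hcl0 hcl1] at hc
  rintro x ⟨a, b, ha, hb, hab, rfl⟩
  rw [CL_ge_iff o r _ p cl hcl0 hcl1]
  have h1 : dist o (a • o + b • c) = b * dist o c := by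
    have : a • o + b • c - o = b • (c - o) := by
      have h' : a = 1 - b := by linarith
      rw [h']; module
    rw [dist_eq_norm, ← dist_eq_norm] at *
    rw [dist_comm o (a • o + b • c), dist_eq_norm, this, norm_smul,
      Real.norm_of_nonneg hb, ← dist_eq_norm, dist_comm]
  have h2 : dist (a • o + b • c) p ≤ a * dist o p + b * dist c p := by
    have : a • o + b • c - p = a • (o - p) + b • (c - p) := by
      have h' : a = 1 - b := by linarith
      rw [h']; module
    rw [dist_eq_norm, this]
    calc ‖a • (o - p) + b • (c - p)‖ ≤ ‖a • (o - p)‖ + ‖b • (c - p)‖ := norm_add_le _ _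
      _ = a * dist o p + b * dist c p := by
          rw [norm_smul, norm_smul, Real.norm_of_nonneg ha, Real.norm_of_nonneg hb,
            dist_eq_norm, dist_eq_norm]
  have hoo : dist o o = 0 := dist_self o
  nlinarith [dist_nonneg (x := o) (y := c), dist_nonneg (x := o) (y := p),
    dist_nonneg (x := c) (y := p)]
end

section
/- (Geometric core of Theorem 4 of the paper, correctness of Clappinq for a single data object.) Let u, v ∈ E with ⟪u,v⟫ = 0, and consider the rectangle R = {o + s·u + t·v : s,t ∈ [−1,1]} with center o, corner points o ± u ± v and side midpoints o ± u and o ± v. Let p ∈ E and cl ∈ (0,1]. If CL(·,p) ≥ cl at all four corner points and at all four side midpoints of R, then CL(x,p) ≥ cl for every point x ∈ R. -/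
open RealInnerProductSpace

/-- Geometric core of Theorem 4 of the paper (correctness of Clappinq for a single data
object): if the confidence level for `p` is at least `cl` at all four corner points and
all four side midpoints of the rectangle `{o + s·u + t·v : s,t ∈ [−1,1]}` (where
`⟪u,v⟫ = 0`), then it is at least `cl` at every point of the rectangle. -/
theorem CL_of_rectangle {E : Type*} [NormedAddCommGroup E] [InnerProductSpace ℝ E]
    (o : E) (r : ℝ) (hr : 0 < r) (u v p : E) (huv : ⟪u, v⟫ = 0)
    (cl : ℝ) (hcl0 : 0 < cl) (hcl1 : cl ≤ 1)
    (hc1 : cl ≤ CL o r (o + u + v) p) (hc2 : cl ≤ CL o r (o + u - v) p)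
    (hc3 : cl ≤ CL o r (o - u + v) p) (hc4 : cl ≤ CL o r (o - u - v) p)
    (hm1 : cl ≤ CL o r (o + u) p) (hm2 : cl ≤ CL o r (o - u) p)
    (hm3 : cl ≤ CL o r (o + v) p) (hm4 : cl ≤ CL o r (o - v) p) :
    ∀ s t : ℝ, s ∈ Set.Icc (-1 : ℝ) 1 → t ∈ Set.Icc (-1 : ℝ) 1 →
      cl ≤ CL o r (o + s • u + t • v) p := by
  -- Key reformulation: `cl ≤ CL o r q p ↔ cl * dist q p + dist o q ≤ r`
  have key : ∀ q : E, (cl ≤ CL o r q p ↔ cl * dist q p + dist o q ≤ r) := by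
    intro q
    have hd : 0 ≤ dist q p := dist_nonneg
    unfold CL
    split_ifs with h1 h2
    · constructor
      · intro h; linarith
      · intro h
        have : 0 ≤ cl * dist q p := mul_nonneg hcl0.le hd
        linarith
    · push_neg at h1
      constructor
      · intro _
        have : cl * dist q p ≤ dist q p := mul_le_of_le_one_left hd hcl1
        linarith
      · intro _; exact hcl1
    · push_neg at h1 h2
      have hpos : 0 < dist q p := by linarith
      rw [le_div_iff₀ hpos]
      constructor <;> intro h <;> linarith
  -- Convexity of `q ↦ cl * dist q p + dist o q` along segments
  have seg : ∀ (x y : E) (θ : ℝ), θ ∈ Set.Icc (-1 : ℝ) 1 →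
      cl * dist x p + dist o x ≤ r → cl * dist y p + dist o y ≤ r →
      cl * dist (((1+θ)/2) • x + ((1-θ)/2) • y) p
        + dist o (((1+θ)/2) • x + ((1-θ)/2) • y) ≤ r := by
    intro x y θ hθ hx hy
    obtain ⟨hθ1, hθ2⟩ := hθ
    have ha : (0:ℝ) ≤ (1+θ)/2 := by linarith
    have hb : (0:ℝ) ≤ (1-θ)/2 := by linarith
    have hab : (1+θ)/2 + (1-θ)/2 = 1 := by ring
    have h1 := (convexOn_dist p convex_univ).2 (Set.mem_univ x) (Set.mem_univ y) ha hb hab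
    have h2 := (convexOn_dist o convex_univ).2 (Set.mem_univ x) (Set.mem_univ y) ha hb hab
    simp only [smul_eq_mul] at h1 h2
    rw [dist_comm o x] at hx
    rw [dist_comm o y] at hy
    rw [dist_comm o _]
    nlinarith [mul_le_mul_of_nonneg_left h1 hcl0.le,
      mul_nonneg ha (sub_nonneg.2 hx), mul_nonneg hb (sub_nonneg.2 hy)]
  intro s t hs ht
  have hA : cl * dist (o + u + v) p + dist o (o + u + v) ≤ r := (key _).1 hc1
  have hB : cl * dist (o + u - v) p + dist o (o + u - v) ≤ r := (key _).1 hc2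
  have hC : cl * dist (o - u + v) p + dist o (o - u + v) ≤ r := (key _).1 hc3
  have hD : cl * dist (o - u - v) p + dist o (o - u - v) ≤ r := (key _).1 hc4
  have e1 : ((1+t)/2) • (o + u + v) + ((1-t)/2) • (o + u - v) = o + u + t • v := by
    module
  have e2 : ((1+t)/2) • (o - u + v) + ((1-t)/2) • (o - u - v) = o - u + t • v := by
    module
  have h1 : cl * dist (o + u + t • v) p + dist o (o + u + t • v) ≤ r := by
    rw [← e1]; exact seg _ _ t ht hA hB
  have h2 : cl * dist (o - u + t • v) p + dist o (o - u + t • v) ≤ r := by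
    rw [← e2]; exact seg _ _ t ht hC hD
  have e3 : ((1+s)/2) • (o + u + t • v) + ((1-s)/2) • (o - u + t • v)
      = o + s • u + t • v := by module
  exact (key _).2 (by rw [← e3]; exact seg _ _ s hs h1 h2)
end

section
/- (Worst-case travel bound for confidence level, k = 1.) Let D ⊆ E be a set of data objects, q ∈ E with dist(o,q) ≤ r, and cl ∈ (0,1]. Let p ∈ D ∩ C(o,r) be a nearest data object to q among D ∩ C(o,r), i.e., dist(q,p) ≤ dist(q,p′) for all p′ ∈ D ∩ C(o,r). If CL(q,p) ≥ cl, then cl · dist(q,p) ≤ dist(q,d) for every d ∈ D; in other words, the distance from q to the returned nearest object is at most 1/cl times the distance from q to the actual nearest data object of D. -/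
/-- Worst-case travel bound for the confidence level (`k = 1`): if `p` is a nearest data
object to `q` among the objects of `D` inside the known region and `CL(q,p) ≥ cl`, then
`cl · dist(q,p) ≤ dist(q,d)` for every data object `d ∈ D`. -/
theorem CL_travel_bound {E : Type*} [NormedAddCommGroup E] [InnerProductSpace ℝ E]
    (o : E) (r : ℝ) (hr : 0 < r) (D : Set E) (q : E) (hq : dist o q ≤ r)
    (cl : ℝ) (hcl0 : 0 < cl) (hcl1 : cl ≤ 1)
    (p : E) (hp : p ∈ D ∩ Metric.closedBall o r)
    (hnear : ∀ p' ∈ D ∩ Metric.closedBall o r, dist q p ≤ dist q p')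
    (hCL : cl ≤ CL o r q p) :
    ∀ d ∈ D, cl * dist q p ≤ dist q d := by
  intro d hd
  by_cases hdball : d ∈ Metric.closedBall o r
  · calc cl * dist q p ≤ 1 * dist q p := by
          exact mul_le_mul_of_nonneg_right hcl1 dist_nonneg
      _ = dist q p := one_mul _
      _ ≤ dist q d := hnear d ⟨hd, hdball⟩
  · have hod : r < dist o d := by simpa [Metric.mem_closedBall, dist_comm] using hdball
    have hqd : r - dist o q ≤ dist q d := by
      have := dist_triangle o q d
      linarith
    have key : cl * dist q p ≤ r - dist o q := by
      unfold CL at hCL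
      rw [if_neg (not_lt.mpr hq)] at hCL
      by_cases h2 : dist q p ≤ r - dist o q
      · rw [if_pos h2] at hCL
        calc cl * dist q p ≤ 1 * dist q p :=
              mul_le_mul_of_nonneg_right hcl1 dist_nonneg
          _ = dist q p := one_mul _
          _ ≤ r - dist o q := h2
      · rw [if_neg h2] at hCL
        have hpos : 0 < dist q p := by
          by_contra h
          push_neg at h
          have : dist q p = 0 := le_antisymm h dist_nonneg
          exact h2 (by rw [this]; linarith)
        have := (le_div_iff₀ hpos).mp hCL
        linarith
    linarith
end

section
/- (Worst-case travel bound for confidence level, general k.) Let D ⊆ E be a set of data objects, q ∈ E with dist(o,q) ≤ r, cl ∈ (0,1], and k a positive integer. Write P = D ∩ C(o,r). Let p ∈ P with CL(q,p) ≥ cl and suppose p is among the k nearest objects of P to q, i.e., the set {p′ ∈ P : dist(q,p′) < dist(q,p)} is finite with cardinality at most k − 1. Then for every finite subset T ⊆ D with |T| = k there exists d ∈ T with cl · dist(q,p) ≤ dist(q,d); in particular, cl · dist(q,p) is at most the distance from q to its actual k-th nearest data object in D. -/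
/-- Worst-case travel bound for the confidence level (general `k`): if `p` is among the
`k` nearest objects of `P = D ∩ C(o,r)` to `q` and `CL(q,p) ≥ cl`, then every set of
`k` data objects of `D` contains an object `d` with `cl · dist(q,p) ≤ dist(q,d)`;
in particular `cl · dist(q,p)` is at most the distance from `q` to its actual `k`-th
nearest data object in `D`. -/
theorem CL_travel_bound_k {E : Type*} [NormedAddCommGroup E] [InnerProductSpace ℝ E]
    (o : E) (r : ℝ) (hr : 0 < r) (D : Set E) (q : E) (hq : dist o q ≤ r)
    (cl : ℝ) (hcl0 : 0 < cl) (hcl1 : cl ≤ 1) (k : ℕ) (hk : 0 < k)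
    (p : E) (hp : p ∈ D ∩ Metric.closedBall o r)
    (hCL : cl ≤ CL o r q p)
    (hfin : {p' ∈ D ∩ Metric.closedBall o r | dist q p' < dist q p}.Finite)
    (hcard : {p' ∈ D ∩ Metric.closedBall o r | dist q p' < dist q p}.ncard ≤ k - 1) :
    ∀ T : Finset E, ↑T ⊆ D → T.card = k → ∃ d ∈ T, cl * dist q p ≤ dist q d := by
  -- First, the key bound: cl * dist q p ≤ r - dist o q.
  have hkey : cl * dist q p ≤ r - dist o q := by
    unfold CL at hCL
    rw [if_neg (not_lt.mpr hq)] at hCL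
    by_cases h : dist q p ≤ r - dist o q
    · rw [if_pos h] at hCL
      calc cl * dist q p ≤ 1 * dist q p := by
            exact mul_le_mul_of_nonneg_right hcl1 dist_nonneg
        _ = dist q p := one_mul _
        _ ≤ r - dist o q := h
    · rw [if_neg h] at hCL
      have hpos : 0 < dist q p := lt_of_le_of_lt (by linarith [not_le.mp h, dist_nonneg (x := o) (y := q)]) (not_le.mp h)
      rw [le_div_iff₀ hpos] at hCL
      exact hCL
  intro T hTD hTcard
  by_contra hcon
  push_neg at hcon
  -- Every element of T lies in the set of closer points.
  have hsub : (T : Set E) ⊆ {p' ∈ D ∩ Metric.closedBall o r | dist q p' < dist q p} := by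
    intro d hd
    have hlt : dist q d < cl * dist q p := hcon d hd
    refine ⟨⟨hTD hd, ?_⟩, ?_⟩
    · rw [Metric.mem_closedBall, dist_comm]
      calc dist o d ≤ dist o q + dist q d := dist_triangle _ _ _
        _ ≤ dist o q + (r - dist o q) := by linarith
        _ = r := by ring
    · calc dist q d < cl * dist q p := hlt
        _ ≤ 1 * dist q p := mul_le_mul_of_nonneg_right hcl1 dist_nonneg
        _ = dist q p := one_mul _
  have hle : (T : Set E).ncard ≤ {p' ∈ D ∩ Metric.closedBall o r | dist q p' < dist q p}.ncard :=
    Set.ncard_le_ncard hsub hfin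
  rw [Set.ncard_coe_finset, hTcard] at hle
  omega
end
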